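/- arXiv:2006.12662 — 2 statements merged into one kernel-verified Lean document; each statement's English description precedes it below -/
import Mathlib

section
/- (Lemma 5.1, second inequality.) Let Q : E → E_i have homogeneous type s with degree n = Σ_j s_j, and suppose ‖Q(v)‖ ≤ C for all v ∈ E with ‖v‖ ≤ 1. Then for every w ∈ E' with ‖w‖ ≤ 1, ‖F_i(Q(F^{-1}(w)))‖ ≤ e^{χ_i − Σ_j s_j χ_j + (n+1)ε} · C. -/
/-- A map `R` from a product of real vector spaces to a real vector space has
homogeneous type `s = (s 0, …, s (ℓ-1))` if scaling the `j`-th component by `a j`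
multiplies the value by `∏ j, (a j) ^ (s j)`. -/
def HomogType {ℓ : ℕ} {E : Fin ℓ → Type*} [∀ j, AddCommGroup (E j)] [∀ j, Module ℝ (E j)]
    {V : Type*} [AddCommGroup V] [Module ℝ V]
    (s : Fin ℓ → ℕ) (R : (∀ j, E j) → V) : Prop :=
  ∀ (a : Fin ℓ → ℝ) (w : ∀ j, E j), R (fun j => a j • w j) = (∏ j, a j ^ s j) • R w

/-! Rescaling the `j`-th component of `F⁻¹ w` by `e^{χ j - ε}` brings it back into the unit
ball, where `Q` is bounded by `C`; homogeneity of `Q` turns this rescaling into the factor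
`e^{-∑ j, s j (χ j - ε)}`, and applying `F i` costs at most `e^{χ i + ε}`. -/

theorem PiLp.norm_le_norm_of_forall_norm_le {p : ENNReal} [Fact (1 ≤ p)] {ι : Type*}
    [Fintype ι] {β γ : ι → Type*} [∀ i, SeminormedAddCommGroup (β i)] [∀ i, SeminormedAddCommGroup (γ i)]
    {x : PiLp p β} {y : PiLp p γ} (h : ∀ i, ‖x i‖ ≤ ‖y i‖) : ‖x‖ ≤ ‖y‖ := by
  rcases p.dichotomy with rfl | hp
  · rw [PiLp.norm_eq_ciSup, PiLp.norm_eq_ciSup]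
    exact ciSup_mono (Finite.bddAbove_range _) h
  · have hp0 : 0 < p.toReal := one_pos.trans_le hp
    rw [PiLp.norm_eq_sum hp0, PiLp.norm_eq_sum hp0]
    gcongr with i
    exact h i

theorem HomogType.norm_eq_inv_prod_mul {ℓ : ℕ} {E : Fin ℓ → Type*} [∀ j, AddCommGroup (E j)]
    [∀ j, Module ℝ (E j)] {V : Type*} [NormedAddCommGroup V] [NormedSpace ℝ V]
    {s : Fin ℓ → ℕ} {R : (∀ j, E j) → V} (hR : HomogType s R) {a : Fin ℓ → ℝ}
    (ha : ∀ j, 0 < a j) (w : ∀ j, E j) :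
    ‖R w‖ = (∏ j, a j ^ s j)⁻¹ * ‖R (fun j => a j • w j)‖ := by
  have hprod : 0 < ∏ j, a j ^ s j := Finset.prod_pos fun j _ => pow_pos (ha j) _
  rw [hR, norm_smul, Real.norm_of_nonneg hprod.le, inv_mul_cancel_left₀ hprod.ne']

theorem LinearEquiv.norm_smul_symm_le_of_mul_norm_le {E E' : Type*} [NormedAddCommGroup E]
    [NormedSpace ℝ E] [NormedAddCommGroup E'] [Module ℝ E'] (F : E ≃ₗ[ℝ] E') {c : ℝ}
    (hc : 0 ≤ c) (hF : ∀ u, c * ‖u‖ ≤ ‖F u‖) (y : E') : ‖c • F.symm y‖ ≤ ‖y‖ := by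
  simpa [norm_smul, abs_of_nonneg hc] using hF (F.symm y)

theorem norm_inv_conj_le_of_homogType_general
    {ℓ : ℕ} (χ : Fin (ℓ + 1) → ℝ)
    (E E' : Fin (ℓ + 1) → Type*)
    [∀ j, NormedAddCommGroup (E j)] [∀ j, NormedSpace ℝ (E j)]
    [∀ j, NormedAddCommGroup (E' j)] [∀ j, NormedSpace ℝ (E' j)]
    (ε : ℝ)
    (F : ∀ j, E j ≃ₗ[ℝ] E' j)
    (hF : ∀ j, ∀ u : E j,
      Real.exp (χ j - ε) * ‖u‖ ≤ ‖F j u‖ ∧ ‖F j u‖ ≤ Real.exp (χ j + ε) * ‖u‖)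
    (i : Fin (ℓ + 1)) (s : Fin (ℓ + 1) → ℕ)
    (Q : PiLp 2 E → E i) (hQ : HomogType s (fun x : (∀ j, E j) => Q (WithLp.toLp 2 x)))
    (C : ℝ) (hC : ∀ v : PiLp 2 E, ‖v‖ ≤ 1 → ‖Q v‖ ≤ C) :
    ∀ w : PiLp 2 E', ‖w‖ ≤ 1 →
      ‖F i (Q (WithLp.toLp 2 (fun j => (F j).symm (w j))))‖ ≤
        Real.exp (χ i - (∑ j, (s j : ℝ) * χ j) + (((∑ j, s j : ℕ) : ℝ) + 1) * ε) * C := by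
  intro w hw
  set v : ∀ j, E j := fun j => (F j).symm (w j)
  have hscaled : ‖WithLp.toLp 2 (fun j => Real.exp (χ j - ε) • v j)‖ ≤ 1 :=
    (PiLp.norm_le_norm_of_forall_norm_le fun j => (F j).norm_smul_symm_le_of_mul_norm_le
      (Real.exp_pos _).le (fun u => (hF j u).1) (w j)).trans hw
  have hprod : ∏ j, Real.exp (χ j - ε) ^ s j = Real.exp (∑ j, (s j : ℝ) * (χ j - ε)) := by
    simp only [Real.exp_sum, ← Real.exp_nat_mul]
  have hQv : ‖Q (WithLp.toLp 2 v)‖ ≤ Real.exp (-∑ j, (s j : ℝ) * (χ j - ε)) * C := by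
    rw [hQ.norm_eq_inv_prod_mul (fun j => Real.exp_pos (χ j - ε)) v, hprod, ← Real.exp_neg]
    exact mul_le_mul_of_nonneg_left (hC _ hscaled) (Real.exp_pos _).le
  calc ‖F i (Q (WithLp.toLp 2 v))‖
      ≤ Real.exp (χ i + ε) * (Real.exp (-∑ j, (s j : ℝ) * (χ j - ε)) * C) :=
        (hF i _).2.trans (mul_le_mul_of_nonneg_left hQv (Real.exp_pos _).le)
    _ = Real.exp (χ i - (∑ j, (s j : ℝ) * χ j) + (((∑ j, s j : ℕ) : ℝ) + 1) * ε) * C := by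
        rw [← mul_assoc, ← Real.exp_add]
        push_cast
        simp only [mul_sub, Finset.sum_sub_distrib, ← Finset.sum_mul]
        ring_nf

/-- Lemma 5.1, second inequality: for `Q : E → Eᵢ` of homogeneous type `s` bounded by `C`
on the unit ball, `‖Fᵢ (Q (F⁻¹ w))‖ ≤ e^{χ i - ∑ s j • χ j + (n+1) ε} C` on the unit ball,
where `n = ∑ j, s j`. -/
theorem norm_inv_conj_le_of_homogType
    {ℓ : ℕ} (χ : Fin (ℓ + 1) → ℝ) (hmono : StrictMono χ) (hneg : ∀ j, χ j < 0)
    (E E' : Fin (ℓ + 1) → Type*)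
    [∀ j, NormedAddCommGroup (E j)] [∀ j, NormedSpace ℝ (E j)]
    [∀ j, NormedAddCommGroup (E' j)] [∀ j, NormedSpace ℝ (E' j)]
    (ε : ℝ) (hε : 0 < ε)
    (F : ∀ j, E j ≃ₗ[ℝ] E' j)
    (hF : ∀ j, ∀ u : E j,
      Real.exp (χ j - ε) * ‖u‖ ≤ ‖F j u‖ ∧ ‖F j u‖ ≤ Real.exp (χ j + ε) * ‖u‖)
    (i : Fin (ℓ + 1)) (s : Fin (ℓ + 1) → ℕ)
    (Q : PiLp 2 E → E i) (hQ : HomogType s (fun x : (∀ j, E j) => Q (WithLp.toLp 2 x)))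
    (C : ℝ) (hC : ∀ v : PiLp 2 E, ‖v‖ ≤ 1 → ‖Q v‖ ≤ C) :
    ∀ w : PiLp 2 E', ‖w‖ ≤ 1 →
      ‖F i (Q (WithLp.toLp 2 (fun j => (F j).symm (w j))))‖ ≤
        Real.exp (χ i - (∑ j, (s j : ℝ) * χ j) + (((∑ j, s j : ℕ) : ℝ) + 1) * ε) * C :=
  norm_inv_conj_le_of_homogType_general χ E E' ε F hF i s Q hQ C hC
end

section
/- (Lemma 5.2, per homogeneous type.) Suppose 0 < ε < min(−χ_ℓ, −λ/(d+2)). Let i ∈ {1,…,ℓ} and s ∈ ℕ^ℓ be such that χ_i > Σ_{j=1}^ℓ s_j χ_j (a non-sub-resonance type), and let R : E' → E'_i have homogeneous type s with ‖R(w)‖ ≤ C for all w ∈ E' with ‖w‖ ≤ 1. Then λ + (d+2)ε < 0, and for every v ∈ E with ‖v‖ ≤ 1, ‖F_i^{-1}(R(F(v)))‖ ≤ e^{λ + (d+2)ε} · C, a bound strictly smaller than C whenever C > 0. -/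
/-!
Write `μ j = χ j + ε`. Rescaling the `j`-th component of `F v` by `e^{-μ j}` lands in the unit
ball, so homogeneity of `R` gives `‖R (F v)‖ ≤ e^{∑ s_j μ_j} C`, and inverting `F_i` costs
`e^{ε - χ_i}`. It remains to bound the exponent `-χ_i + ∑ s_j χ_j + (n + 1) ε`, `n = ∑ s_j`:
for `n ≤ d + 1` the first two terms are at most `λ̃`, while for larger `n` each extra unit of
degree contributes `χ_ℓ + ε < 0`, reducing to the case `n = d + 1` estimated by
`-χ_1 + (d + 1) χ_ℓ`.
-/

open Finset

lemma PiLp.norm_le_norm_of_forall_norm_le_s7 {ι : Type*} [Fintype ι]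
    {E G : ι → Type*} [∀ j, SeminormedAddCommGroup (E j)] [∀ j, SeminormedAddCommGroup (G j)]
    {u : PiLp 2 E} {v : PiLp 2 G} (h : ∀ j, ‖u j‖ ≤ ‖v j‖) : ‖u‖ ≤ ‖v‖ := by
  rw [PiLp.norm_eq_of_L2, PiLp.norm_eq_of_L2]
  gcongr with j
  exact h j

lemma LinearEquiv.norm_symm_le_of_mul_norm_le {E F : Type*}
    [SeminormedAddCommGroup E] [Module ℝ E] [SeminormedAddCommGroup F] [Module ℝ F]
    (f : E ≃ₗ[ℝ] F) {c : ℝ} (hc : 0 < c) (hf : ∀ u, c * ‖u‖ ≤ ‖f u‖) (y : F) :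
    ‖f.symm y‖ ≤ c⁻¹ * ‖y‖ := by
  rw [le_inv_mul_iff₀ hc]
  simpa using hf (f.symm y)

section Homogeneous

variable {ι : ℕ} {E G : Fin ι → Type*}
  [∀ j, SeminormedAddCommGroup (E j)] [∀ j, NormedSpace ℝ (E j)]
  [∀ j, SeminormedAddCommGroup (G j)]
  {V : Type*} [SeminormedAddCommGroup V] [NormedSpace ℝ V]
  {s : Fin ι → ℕ} {R : PiLp 2 E → V} {C : ℝ}

lemma HomogType.norm_le_prod_mul (hR : HomogType s (fun w => R (WithLp.toLp 2 w)))
    (hC : ∀ w : PiLp 2 E, ‖w‖ ≤ 1 → ‖R w‖ ≤ C) {a : Fin ι → ℝ} (ha : ∀ j, 0 < a j)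
    {w : PiLp 2 E} {v : PiLp 2 G} (hv : ‖v‖ ≤ 1) (hw : ∀ j, ‖w j‖ ≤ a j * ‖v j‖) :
    ‖R w‖ ≤ (∏ j, a j ^ s j) * C := by
  set u : PiLp 2 E := WithLp.toLp 2 fun j => (a j)⁻¹ • w j
  have hu : ‖u‖ ≤ 1 := by
    refine le_trans (PiLp.norm_le_norm_of_forall_norm_le_s7 fun j => ?_) hv
    rw [norm_smul, norm_inv, Real.norm_of_nonneg (ha j).le, inv_mul_le_iff₀ (ha j)]
    exact hw j
  have hwu : w = WithLp.toLp 2 fun j => a j • u j := by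
    ext j
    exact (smul_inv_smul₀ (ha j).ne' (w j)).symm
  have hscale : R (WithLp.toLp 2 fun j => a j • u j) = (∏ j, a j ^ s j) • R u := hR a u.ofLp
  have hprod : 0 ≤ ∏ j, a j ^ s j := prod_nonneg fun j _ => pow_nonneg (ha j).le _
  rw [hwu, hscale, norm_smul, Real.norm_of_nonneg hprod]
  exact mul_le_mul_of_nonneg_left (hC u hu) hprod

lemma HomogType.norm_le_exp_mul (hR : HomogType s (fun w => R (WithLp.toLp 2 w)))
    (hC : ∀ w : PiLp 2 E, ‖w‖ ≤ 1 → ‖R w‖ ≤ C) (μ : Fin ι → ℝ)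
    {w : PiLp 2 E} {v : PiLp 2 G} (hv : ‖v‖ ≤ 1) (hw : ∀ j, ‖w j‖ ≤ Real.exp (μ j) * ‖v j‖) :
    ‖R w‖ ≤ Real.exp (∑ j, (s j : ℝ) * μ j) * C := by
  have hprod : ∏ j, Real.exp (μ j) ^ s j = Real.exp (∑ j, (s j : ℝ) * μ j) := by
    simp only [Real.exp_sum, ← Real.exp_nat_mul]
  rw [← hprod]
  exact hR.norm_le_prod_mul hC (fun j => Real.exp_pos _) hv hw

end Homogeneous

section Exponents

variable {ℓ : ℕ} {χ : Fin (ℓ + 1) → ℝ}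

lemma sum_mul_le_sum_mul_last (hmono : Monotone χ) (s : Fin (ℓ + 1) → ℕ) :
    ∑ j, (s j : ℝ) * χ j ≤ (∑ j, (s j : ℝ)) * χ (Fin.last ℓ) := by
  rw [sum_mul]
  gcongr with j
  exact hmono (Fin.le_last j)

lemma add_one_mul_floor_div_lt {a b : ℝ} (hb : b < 0) : ((⌊a / b⌋ : ℝ) + 1) * b < a :=
  (div_lt_iff_of_neg hb).mp (Int.lt_floor_add_one _)

lemma nonsubresonance_exponent_le (hmono : Monotone χ) {ε D lam : ℝ} (hε : 0 ≤ ε)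
    (hεχ : χ (Fin.last ℓ) + ε < 0) {i : Fin (ℓ + 1)} {s : Fin (ℓ + 1) → ℕ}
    (hres : -χ i + ∑ j, (s j : ℝ) * χ j ≤ lam) (hlast : -χ 0 + (D + 1) * χ (Fin.last ℓ) ≤ lam) :
    ε - χ i + ∑ j, (s j : ℝ) * (χ j + ε) ≤ lam + (D + 2) * ε := by
  have hsplit : ∑ j, (s j : ℝ) * (χ j + ε) = ∑ j, (s j : ℝ) * χ j + (∑ j, (s j : ℝ)) * ε := by
    rw [sum_mul, ← sum_add_distrib]
    exact sum_congr rfl fun j _ => by ring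
  set n : ℝ := ∑ j, (s j : ℝ)
  rw [hsplit]
  rcases le_or_gt n (D + 1) with hsmall | hlarge
  · nlinarith
  · have h0i : χ 0 ≤ χ i := hmono (Fin.zero_le i)
    have hsum := sum_mul_le_sum_mul_last hmono s
    nlinarith [mul_nonneg (by linarith : (0 : ℝ) ≤ n - D - 1)
      (by linarith : (0 : ℝ) ≤ -(χ (Fin.last ℓ) + ε))]

end Exponents

/-- Lemma 5.2 per homogeneous type: if `0 < ε < min (-χ_ℓ) (-λ/(d+2))` and `(i, s)` is a
non-sub-resonance type, then `λ + (d+2) ε < 0` and the conjugation `Fᵢ⁻¹ ∘ R ∘ F` of a map of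
homogeneous type `s` bounded by `C` on the unit ball is bounded by `e^{λ + (d+2) ε} C < C`. -/
theorem conj_contracts_nonsubresonance
    {ℓ : ℕ} (χ : Fin (ℓ + 1) → ℝ) (hmono : StrictMono χ) (hneg : ∀ j, χ j < 0)
    (E E' : Fin (ℓ + 1) → Type*)
    [∀ j, NormedAddCommGroup (E j)] [∀ j, NormedSpace ℝ (E j)]
    [∀ j, NormedAddCommGroup (E' j)] [∀ j, NormedSpace ℝ (E' j)]
    (d : ℤ) (hd : d = ⌊χ 0 / χ (Fin.last ℓ)⌋)
    (lamT : ℝ)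
    (hlamT : IsGreatest {x : ℝ | x < 0 ∧ ∃ (i : Fin (ℓ + 1)) (s : Fin (ℓ + 1) → ℕ),
      x = -χ i + ∑ j, (s j : ℝ) * χ j} lamT)
    (lam : ℝ) (hlam : lam = max lamT (-χ 0 + ((d : ℝ) + 1) * χ (Fin.last ℓ)))
    (ε : ℝ) (hε : 0 < ε)
    (hε' : ε < min (-χ (Fin.last ℓ)) (-lam / ((d : ℝ) + 2)))
    (F : ∀ j, E j ≃ₗ[ℝ] E' j)
    (hF : ∀ j, ∀ u : E j,
      Real.exp (χ j - ε) * ‖u‖ ≤ ‖F j u‖ ∧ ‖F j u‖ ≤ Real.exp (χ j + ε) * ‖u‖)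
    (i : Fin (ℓ + 1)) (s : Fin (ℓ + 1) → ℕ)
    (hns : (∑ j, (s j : ℝ) * χ j) < χ i)
    (R : PiLp 2 E' → E' i) (hR : HomogType s (fun w => R (WithLp.toLp 2 w)))
    (C : ℝ) (hC : ∀ w : PiLp 2 E', ‖w‖ ≤ 1 → ‖R w‖ ≤ C) :
    lam + ((d : ℝ) + 2) * ε < 0 ∧
      (∀ v : PiLp 2 E, ‖v‖ ≤ 1 →
        ‖(F i).symm (R (WithLp.toLp 2 (fun j => F j (v j))))‖ ≤ Real.exp (lam + ((d : ℝ) + 2) * ε) * C) ∧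
      (0 < C → Real.exp (lam + ((d : ℝ) + 2) * ε) * C < C) := by
  obtain ⟨⟨hlamT_neg, -⟩, hlamT_ub⟩ := hlamT
  have hlast := hneg (Fin.last ℓ)
  have hd0 : (0 : ℝ) ≤ d := by
    rw [hd]
    exact_mod_cast Int.floor_nonneg.mpr (div_nonneg_of_nonpos (hneg 0).le hlast.le)
  have hlam_neg : lam < 0 := by
    rw [hlam]
    exact max_lt hlamT_neg (by linarith [hd ▸ add_one_mul_floor_div_lt (a := χ 0) hlast])
  have hrate : lam + ((d : ℝ) + 2) * ε < 0 := by
    have := (lt_div_iff₀ (by linarith)).mp (hε'.trans_le (min_le_right _ _))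
    linarith
  have hexp : ε - χ i + ∑ j, (s j : ℝ) * (χ j + ε) ≤ lam + ((d : ℝ) + 2) * ε :=
    nonsubresonance_exponent_le hmono.monotone hε.le (by linarith [hε'.trans_le (min_le_left _ _)])
      ((hlamT_ub ⟨by linarith, i, s, rfl⟩).trans (hlam ▸ le_max_left _ _))
      (hlam ▸ le_max_right _ _)
  have hC0 : 0 ≤ C := (norm_nonneg _).trans (hC 0 (by simp))
  refine ⟨hrate, fun v hv => ?_,
    fun hCpos => mul_lt_of_lt_one_left hCpos (Real.exp_lt_one_iff.mpr hrate)⟩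
  calc ‖(F i).symm (R (WithLp.toLp 2 (fun j => F j (v j))))‖
      ≤ (Real.exp (χ i - ε))⁻¹ * ‖R (WithLp.toLp 2 (fun j => F j (v j)))‖ :=
        (F i).norm_symm_le_of_mul_norm_le (Real.exp_pos _) (fun u => (hF i u).1) _
    _ ≤ Real.exp (ε - χ i) * (Real.exp (∑ j, (s j : ℝ) * (χ j + ε)) * C) := by
        rw [← Real.exp_neg, neg_sub]
        gcongr
        exact hR.norm_le_exp_mul hC _ hv fun j => (hF j (v j)).2
    _ = Real.exp (ε - χ i + ∑ j, (s j : ℝ) * (χ j + ε)) * C := by rw [Real.exp_add, mul_assoc]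
    _ ≤ Real.exp (lam + ((d : ℝ) + 2) * ε) * C := by gcongr
end
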